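/- arXiv:1806.11283 — 7 statements merged into one kernel-verified Lean document; each statement's English description precedes it below -/
import Mathlib

section
/- Let v ∈ ℝ⁴ satisfy η(v,v) = 1 and v₀ > 0 (a future-directed unit timelike vector). Then the matrix γ₀·(v·γ) ∈ M₄(ℂ) is Hermitian and positive definite. -/
/-!
The matrix `M = γ₀ (v·γ)` is Hermitian and satisfies `M² - 2 v₀ M + η(v,v) = 0`.
When `η(v,v) = 1` this says `M = (Mᴴ M + 1) / (2 v₀)`, which is positive definite since `v₀ > 0`.
-/

open Matrix Complex ComplexOrder

/-- The Dirac gamma matrix `γ₀ = diag(1,1,-1,-1)`. -/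
noncomputable def γ0 : Matrix (Fin 4) (Fin 4) ℂ :=
  !![1, 0, 0, 0; 0, 1, 0, 0; 0, 0, -1, 0; 0, 0, 0, -1]

/-- The Dirac gamma matrix `γ₁`. -/
noncomputable def γ1 : Matrix (Fin 4) (Fin 4) ℂ :=
  !![0, 0, 0, 1; 0, 0, 1, 0; 0, -1, 0, 0; -1, 0, 0, 0]

/-- The Dirac gamma matrix `γ₂`. -/
noncomputable def γ2 : Matrix (Fin 4) (Fin 4) ℂ :=
  !![0, 0, 0, -I; 0, 0, I, 0; 0, I, 0, 0; -I, 0, 0, 0]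

/-- The Dirac gamma matrix `γ₃`. -/
noncomputable def γ3 : Matrix (Fin 4) (Fin 4) ℂ :=
  !![0, 0, 1, 0; 0, 0, 0, -1; -1, 0, 0, 0; 0, 1, 0, 0]

/-- `v·γ := v₀γ₀ + v₁γ₁ + v₂γ₂ + v₃γ₃`. -/
noncomputable def vγ (v : Fin 4 → ℝ) : Matrix (Fin 4) (Fin 4) ℂ :=
  (v 0 : ℂ) • γ0 + (v 1 : ℂ) • γ1 + (v 2 : ℂ) • γ2 + (v 3 : ℂ) • γ3

/-- The Minkowski form `η(u,v) = u₀v₀ − u₁v₁ − u₂v₂ − u₃v₃` on `ℝ⁴`. -/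
def mink (u v : Fin 4 → ℝ) : ℝ := u 0 * v 0 - u 1 * v 1 - u 2 * v 2 - u 3 * v 3

theorem Matrix.IsHermitian.posDef_of_mul_self_add_one_eq_smul {n 𝕜 : Type*} [Fintype n]
    [DecidableEq n] [RCLike 𝕜] {M : Matrix n n 𝕜} (hM : M.IsHermitian) {c : ℝ} (hc : 0 < c)
    (h : M * M + 1 = c • M) : M.PosDef := by
  have hM_eq : M = c⁻¹ • (Mᴴ * M + 1) := by
    rw [hM.eq, h, smul_smul, inv_mul_cancel₀ hc.ne', one_smul]
  rw [hM_eq]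
  exact (PosDef.posSemidef_add (posSemidef_conjTranspose_mul_self M) PosDef.one).smul
    (inv_pos.mpr hc)

theorem γ0_mul_vγ (v : Fin 4 → ℝ) :
    γ0 * vγ v =
      !![(v 0 : ℂ), 0, v 3, v 1 - I * v 2;
         0, v 0, v 1 + I * v 2, -v 3;
         v 3, v 1 - I * v 2, v 0, 0;
         v 1 + I * v 2, -v 3, 0, v 0] := by
  ext i j
  fin_cases i <;> fin_cases j <;>
    simp [γ0, γ1, γ2, γ3, vγ, mul_apply, Fin.sum_univ_four] <;> ring

theorem isHermitian_γ0_mul_vγ (v : Fin 4 → ℝ) : (γ0 * vγ v).IsHermitian := by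
  rw [IsHermitian, γ0_mul_vγ]
  ext i j
  fin_cases i <;> fin_cases j <;> simp [conjTranspose_apply, conj_ofReal] <;> ring

theorem γ0_mul_vγ_mul_self_add_mink_smul_one (v : Fin 4 → ℝ) :
    γ0 * vγ v * (γ0 * vγ v) + (mink v v : ℂ) • 1 = (2 * v 0) • (γ0 * vγ v) := by
  rw [γ0_mul_vγ, mink]
  ext i j
  fin_cases i <;> fin_cases j <;>
    simp [one_apply] <;> ring_nf <;> simp only [I_sq] <;> ring

/-- If `v` is a future-directed unit timelike vector (`η(v,v) = 1`, `v₀ > 0`) then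
`γ₀·(v·γ)` is Hermitian and positive definite. -/
theorem statement2 (v : Fin 4 → ℝ) (hv : mink v v = 1) (hv0 : 0 < v 0) :
    (γ0 * vγ v).IsHermitian ∧ (γ0 * vγ v).PosDef := by
  have hM := isHermitian_γ0_mul_vγ v
  refine ⟨hM, hM.posDef_of_mul_self_add_one_eq_smul (by positivity : (0 : ℝ) < 2 * v 0) ?_⟩
  simpa [hv] using γ0_mul_vγ_mul_self_add_mink_smul_one v
end

section
/- Let v ∈ ℝ⁴ satisfy η(v,v) = 1 and v₀ > 0 (so v₀ ≥ 1). Then the spectrum of the matrix T := γ₀·(v·γ) ∈ M₄(ℂ) is exactly the set {v₀ + √(v₀² − 1), v₀ − √(v₀² − 1)}. -/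
open Matrix Complex ComplexOrder

set_option maxHeartbeats 1000000 in
private lemma statement4_quad (v : Fin 4 → ℝ) (hv : mink v v = 1) :
    (γ0 * vγ v) * (γ0 * vγ v) = (2*(v 0 : ℂ)) • (γ0 * vγ v) - 1 := by
  have hr : v 0 * v 0 - v 1 * v 1 - v 2 * v 2 - v 3 * v 3 = 1 := hv
  have hη : ((v 0:ℂ))*(v 0) - (v 1)*(v 1) - (v 2)*(v 2) - (v 3)*(v 3) = 1 := by
    exact_mod_cast hr
  ext i j
  fin_cases i <;> fin_cases j <;>
    simp [γ0, γ1, γ2, γ3, vγ, Matrix.mul_apply, Fin.sum_univ_four, Matrix.one_apply]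
  all_goals
    first
      | ring1
      | linear_combination -hη - ((v 2:ℂ)*(v 2))*Complex.I_mul_I

private lemma statement4_T02 (v : Fin 4 → ℝ) : (γ0 * vγ v) 0 2 = (v 3 : ℂ) := by
  simp [γ0, γ1, γ2, γ3, vγ, Matrix.mul_apply, Fin.sum_univ_four]

private lemma statement4_T03 (v : Fin 4 → ℝ) : (γ0 * vγ v) 0 3 = (v 1 : ℂ) - (v 2) * I := by
  simp [γ0, γ1, γ2, γ3, vγ, Matrix.mul_apply, Fin.sum_univ_four]
  ring


/-- If `v` is a future-directed unit timelike vector then the spectrum of `T := γ₀·(v·γ)` is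
exactly `{v₀ + √(v₀² − 1), v₀ − √(v₀² − 1)}`. -/
theorem statement4 (v : Fin 4 → ℝ) (hv : mink v v = 1) (hv0 : 0 < v 0) :
    spectrum ℂ (γ0 * vγ v) =
      {((v 0 + Real.sqrt ((v 0) ^ 2 - 1) : ℝ) : ℂ),
        ((v 0 - Real.sqrt ((v 0) ^ 2 - 1) : ℝ) : ℂ)} := by
  set T : Matrix (Fin 4) (Fin 4) ℂ := γ0 * vγ v with hT
  have hr : v 0 * v 0 - v 1 * v 1 - v 2 * v 2 - v 3 * v 3 = 1 := hv
  have hq : T * T = (2*(v 0 : ℂ)) • T - 1 := statement4_quad v hv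
  set s : ℝ := Real.sqrt ((v 0) ^ 2 - 1) with hs
  have hsq : s ^ 2 = (v 0) ^ 2 - 1 := Real.sq_sqrt (by nlinarith [sq_nonneg (v 1), sq_nonneg (v 2), sq_nonneg (v 3)])
  set lam : ℂ := ((v 0 + s : ℝ) : ℂ) with hlam
  set lam' : ℂ := ((v 0 - s : ℝ) : ℂ) with hlam'
  have hsum : lam + lam' = 2 * (v 0 : ℂ) := by rw [hlam, hlam']; push_cast; ring
  have hprod : lam * lam' = 1 := by
    rw [hlam, hlam']
    have : ((s:ℂ))^2 = ((v 0 : ℂ))^2 - 1 := by exact_mod_cast hsq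
    push_cast
    linear_combination -this
  -- the key expansion
  have expand : ∀ μ μ' : ℂ, μ + μ' = 2 * (v 0 : ℂ) →
      (μ • (1 : Matrix (Fin 4) (Fin 4) ℂ) - T) * (μ' • 1 - T) = (μ * μ' - 1) • 1 := by
    intro μ μ' h
    have e1 : (μ • (1 : Matrix (Fin 4) (Fin 4) ℂ) - T) * (μ' • 1 - T)
        = (μ*μ') • (1 : Matrix (Fin 4) (Fin 4) ℂ) - μ • T - μ' • T + T * T := by
      simp only [sub_mul, mul_sub, Matrix.smul_mul, Matrix.mul_smul, one_mul, mul_one,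
        smul_smul]
      module
    rw [e1, hq, ← h]
    module
  -- degenerate case helper: if T is scalar then s = 0
  have scalar_case : ∀ μ0 : ℂ, T = μ0 • 1 → s = 0 := by
    intro μ0 hTs
    have h02 : (v 3 : ℂ) = 0 := by
      have := statement4_T02 v
      rw [← hT, hTs] at this
      simpa [Matrix.one_apply] using this.symm
    have h03 : (v 1 : ℂ) - (v 2) * I = 0 := by
      have := statement4_T03 v
      rw [← hT, hTs] at this
      simpa [Matrix.one_apply] using this.symm
    have hv3 : v 3 = 0 := by exact_mod_cast h02
    have hre := congrArg Complex.re h03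
    have him := congrArg Complex.im h03
    simp at hre him
    have hv01 : v 0 = 1 := by
      have hfac : (v 0 - 1) * (v 0 + 1) = 0 := by
        rw [hre, him, hv3] at hr; linear_combination hr
      rcases mul_eq_zero.mp hfac with h | h
      · linarith
      · linarith
    rw [hs, hv01]
    simp
  have memlam : lam ∈ spectrum ℂ T := by
    rw [spectrum.mem_iff, Algebra.algebraMap_eq_smul_one]
    intro hU
    have hAB : (lam • (1 : Matrix (Fin 4) (Fin 4) ℂ) - T) * (lam' • 1 - T) = 0 := by
      rw [expand lam lam' hsum, hprod]; simp
    have hB : lam' • (1 : Matrix (Fin 4) (Fin 4) ℂ) - T = 0 :=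
      hU.mul_left_cancel (by rw [hAB, mul_zero])
    have hTs : T = lam' • 1 := (sub_eq_zero.mp hB).symm
    have hs0 : s = 0 := scalar_case lam' hTs
    have hll : lam = lam' := by rw [hlam, hlam', hs0]; norm_num
    rw [hll, hTs] at hU
    simp at hU
  have memlam' : lam' ∈ spectrum ℂ T := by
    rw [spectrum.mem_iff, Algebra.algebraMap_eq_smul_one]
    intro hU
    have hAB : (lam' • (1 : Matrix (Fin 4) (Fin 4) ℂ) - T) * (lam • 1 - T) = 0 := by
      rw [expand lam' lam (by rw [add_comm]; exact hsum), mul_comm, hprod]; simp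
    have hB : lam • (1 : Matrix (Fin 4) (Fin 4) ℂ) - T = 0 :=
      hU.mul_left_cancel (by rw [hAB, mul_zero])
    have hTs : T = lam • 1 := (sub_eq_zero.mp hB).symm
    have hs0 : s = 0 := scalar_case lam hTs
    have hll : lam = lam' := by rw [hlam, hlam', hs0]; norm_num
    rw [← hll, hTs] at hU
    simp at hU
  have hsub : ∀ μ : ℂ, μ ∈ spectrum ℂ T → μ = lam ∨ μ = lam' := by
    intro μ hμ
    by_contra hcon
    push_neg at hcon
    obtain ⟨h1, h2⟩ := hcon
    set μ' : ℂ := 2*(v 0:ℂ) - μ with hμ'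
    have hsum2 : μ + μ' = 2*(v 0:ℂ) := by rw [hμ']; ring
    have hfac : μ * μ' - 1 = -((μ - lam) * (μ - lam')) := by
      rw [hμ']; linear_combination (-μ) * hsum + hprod
    have hc : μ * μ' - 1 ≠ 0 := by
      rw [hfac]
      exact neg_ne_zero.mpr (mul_ne_zero (sub_ne_zero.mpr h1) (sub_ne_zero.mpr h2))
    have hAB := expand μ μ' hsum2
    have hBA := expand μ' μ (by rw [add_comm]; exact hsum2)
    rw [mul_comm μ' μ] at hBA
    have hU : IsUnit (μ • (1 : Matrix (Fin 4) (Fin 4) ℂ) - T) := by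
      rw [isUnit_iff_exists]
      refine ⟨(μ * μ' - 1)⁻¹ • (μ' • 1 - T), ?_, ?_⟩
      · rw [Matrix.mul_smul, hAB, smul_smul, inv_mul_cancel₀ hc, one_smul]
      · rw [Matrix.smul_mul, hBA, smul_smul, inv_mul_cancel₀ hc, one_smul]
    rw [spectrum.mem_iff, Algebra.algebraMap_eq_smul_one] at hμ
    exact hμ hU
  ext μ
  simp only [Set.mem_insert_iff, Set.mem_singleton_iff]
  constructor
  · exact hsub μ
  · rintro (rfl | rfl)
    · exact memlam
    · exact memlam'
end

section
/- Let v ∈ ℝ⁴ satisfy η(v,v) = 1 and v₀ > 0. Then the operator norm of the matrix γ₀·(v·γ), acting on ℂ⁴ equipped with the standard Hermitian inner product, equals v₀ + √(v₀² − 1), i.e. the relative Doppler shift factor between v and the reference vector e₀ = (1,0,0,0). -/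
open Matrix Complex ComplexOrder

/-!
The matrix `M = γ₀ (v·γ)` is Hermitian, because `(v·γ)ᴴ = γ₀ (v·γ) γ₀`, and the Clifford relation
`(v·γ)² = η(v,v)` together with `γ₀ (v·γ) γ₀ = 2 v₀ γ₀ - v·γ` gives `M² = 2 v₀ M - 1`. So `M` is
annihilated by `(X - λ₊)(X - λ₋)` with `λ± = v₀ ± √(v₀² - 1)`. For a self-adjoint `T` with such a
relation, `‖Tψ‖² = (λ₊ + λ₋) Re⟪ψ, Tψ⟫ - λ₊λ₋‖ψ‖² ≤ (λ₊ + λ₋)‖ψ‖‖Tψ‖ - λ₊λ₋‖ψ‖²`, i.e.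
`(‖Tψ‖ - λ₊‖ψ‖)(‖Tψ‖ - λ₋‖ψ‖) ≤ 0`, whence `‖T‖ ≤ λ₊`; and `λ₊` is attained on an eigenvector.
-/

theorem γ0_mul_self : γ0 * γ0 = 1 := by
  ext i j; fin_cases i <;> fin_cases j <;> simp [γ0, Matrix.mul_apply, Fin.sum_univ_four]

theorem isHermitian_γ0 : γ0.IsHermitian := by
  ext i j; fin_cases i <;> fin_cases j <;> simp [γ0]

theorem vγ_mul_self (v : Fin 4 → ℝ) : vγ v * vγ v = (mink v v : ℂ) • 1 := by
  ext i j
  fin_cases i <;> fin_cases j <;>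
    simp [vγ, γ0, γ1, γ2, γ3, mink, Matrix.mul_apply, Fin.sum_univ_four] <;>
    ring_nf <;> simp [I_sq] <;> ring

theorem γ0_mul_vγ_mul_γ0 (v : Fin 4 → ℝ) : γ0 * vγ v * γ0 = (2 * v 0 : ℂ) • γ0 - vγ v := by
  ext i j
  fin_cases i <;> fin_cases j <;>
    simp [vγ, γ0, γ1, γ2, γ3, Matrix.mul_apply, Fin.sum_univ_four] <;> ring

theorem conjTranspose_vγ (v : Fin 4 → ℝ) : (vγ v)ᴴ = γ0 * vγ v * γ0 := by
  ext i j
  fin_cases i <;> fin_cases j <;>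
    simp [vγ, γ0, γ1, γ2, γ3, Matrix.mul_apply, Fin.sum_univ_four] <;> ring

theorem γ0_mul_vγ_apply_zero_zero (v : Fin 4 → ℝ) : (γ0 * vγ v) 0 0 = v 0 := by
  simp [vγ, γ0, γ1, γ2, γ3, Matrix.mul_apply, Fin.sum_univ_four]

theorem γ0_mul_vγ_mul_self (v : Fin 4 → ℝ) :
    γ0 * vγ v * (γ0 * vγ v) = (2 * v 0 : ℂ) • (γ0 * vγ v) - (mink v v : ℂ) • 1 := by
  rw [← mul_assoc, γ0_mul_vγ_mul_γ0, sub_mul, vγ_mul_self, smul_mul_assoc]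

section QuadraticOperator

variable {𝕜 E : Type*} [RCLike 𝕜] [NormedAddCommGroup E] [InnerProductSpace 𝕜 E]

theorem LinearMap.IsSymmetric.norm_apply_le_of_mul_self_eq {T : E →ₗ[𝕜] E} (hT : T.IsSymmetric)
    {a b : ℝ} (hba : |b| ≤ a) (hTT : T * T = ((a : 𝕜) + b) • T - ((a : 𝕜) * b) • 1)
    (x : E) : ‖T x‖ ≤ a * ‖x‖ := by
  have hTTx : T (T x) = ((a + b : ℝ) : 𝕜) • T x - ((a * b : ℝ) : 𝕜) • x := by
    push_cast; exact LinearMap.congr_fun hTT x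
  have hnorm : ‖T x‖ ^ 2 = (a + b) * RCLike.re (inner 𝕜 x (T x)) - a * b * ‖x‖ ^ 2 := by
    rw [← inner_self_eq_norm_sq (𝕜 := 𝕜), hT, hTTx, inner_sub_right, inner_smul_right,
      inner_smul_right, map_sub, RCLike.re_ofReal_mul, RCLike.re_ofReal_mul,
      inner_self_eq_norm_sq]
  have hre : RCLike.re (inner 𝕜 x (T x)) ≤ ‖x‖ * ‖T x‖ := re_inner_le_norm x (T x)
  obtain ⟨hab, hb⟩ := abs_le.mp hba
  by_contra! h
  have hgt : b * ‖x‖ < ‖T x‖ := by nlinarith [norm_nonneg x]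
  nlinarith [mul_pos (sub_pos.mpr h) (sub_pos.mpr hgt),
    mul_nonneg (by linarith : 0 ≤ a + b) (sub_nonneg.mpr hre)]

theorem IsSelfAdjoint.norm_le_of_mul_self_eq [CompleteSpace E] {T : E →L[𝕜] E}
    (hT : IsSelfAdjoint T) {a b : ℝ} (hba : |b| ≤ a)
    (hTT : T * T = ((a : 𝕜) + b) • T - ((a : 𝕜) * b) • 1) : ‖T‖ ≤ a :=
  T.opNorm_le_bound ((abs_nonneg b).trans hba) <|
    hT.isSymmetric.norm_apply_le_of_mul_self_eq hba (by
      ext x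
      exact congr($hTT x))

end QuadraticOperator

section Eigenvector

variable {𝕜 E : Type*} [NontriviallyNormedField 𝕜] [NormedAddCommGroup E] [NormedSpace 𝕜 E]

theorem ContinuousLinearMap.norm_le_opNorm_of_apply_eq_smul (T : E →L[𝕜] E) {c : 𝕜} {x : E}
    (hx : x ≠ 0) (hTx : T x = c • x) : ‖c‖ ≤ ‖T‖ := by
  have := T.le_opNorm x
  rw [hTx, norm_smul] at this
  exact le_of_mul_le_mul_right this (norm_pos_iff.mpr hx)

/-- If `T` is annihilated by `(X - a) (X - b)`, then every nonzero vector in the range of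
`T - b` is an eigenvector for `a`. -/
theorem ContinuousLinearMap.exists_apply_eq_smul_of_mul_self_eq [Nontrivial E] {T : E →L[𝕜] E}
    {a b : 𝕜} (hTT : T * T = (a + b) • T - (a * b) • 1) (hb : T = b • 1 → a = b) :
    ∃ x ≠ 0, T x = a • x := by
  by_cases hTb : T = b • 1
  · obtain ⟨x, hx⟩ := exists_ne (0 : E)
    exact ⟨x, hx, by rw [hb hTb, hTb]; rfl⟩
  · obtain ⟨y, hy⟩ : ∃ y, T y - b • y ≠ 0 := by
      by_contra! h
      exact hTb (ext fun y => by simpa [sub_eq_zero] using h y)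
    refine ⟨T y - b • y, hy, ?_⟩
    have hTTy : T (T y) = (a + b) • T y - (a * b) • y := congr($hTT y)
    rw [map_sub, map_smul, hTTy]
    module

end Eigenvector

/-- If `v` is a future-directed unit timelike vector then the operator norm of `γ₀·(v·γ)` on
`ℂ⁴` with the standard Hermitian inner product is `v₀ + √(v₀² − 1)`, the Doppler shift factor
between `v` and `e₀ = (1,0,0,0)`. -/
theorem statement5 (v : Fin 4 → ℝ) (hv : mink v v = 1) (hv0 : 0 < v 0) :
    ‖Matrix.toEuclideanCLM (𝕜 := ℂ) (n := Fin 4) (γ0 * vγ v)‖ =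
      v 0 + Real.sqrt ((v 0) ^ 2 - 1) := by
  set s := √(v 0 ^ 2 - 1)
  set T := toEuclideanCLM (𝕜 := ℂ) (n := Fin 4) (γ0 * vγ v)
  have hs : s ^ 2 = v 0 ^ 2 - 1 := Real.sq_sqrt <| by
    unfold mink at hv; nlinarith [sq_nonneg (v 1), sq_nonneg (v 2), sq_nonneg (v 3)]
  have hs0 : 0 ≤ s := Real.sqrt_nonneg _
  have hT : IsSelfAdjoint T := (isHermitian_γ0_mul_vγ v).isSelfAdjoint.map toEuclideanCLM
  have hTT : T * T = (((v 0 + s : ℝ) : ℂ) + ((v 0 - s : ℝ) : ℂ)) • T -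
      (((v 0 + s : ℝ) : ℂ) * ((v 0 - s : ℝ) : ℂ)) • 1 := by
    have h := congrArg (toEuclideanCLM (𝕜 := ℂ) (n := Fin 4)) (γ0_mul_vγ_mul_self v)
    rw [map_mul, map_sub, map_smul, map_smul, map_one, hv] at h
    have hsC : (s : ℂ) ^ 2 = (v 0 : ℂ) ^ 2 - 1 := by exact_mod_cast hs
    rw [h]
    congr 2 <;> push_cast
    · ring
    · linear_combination hsC
  have hb : T = ((v 0 - s : ℝ) : ℂ) • 1 → ((v 0 + s : ℝ) : ℂ) = ((v 0 - s : ℝ) : ℂ) := by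
    intro hTb
    have hM : γ0 * vγ v = ((v 0 - s : ℝ) : ℂ) • 1 :=
      EmbeddingLike.injective (toEuclideanCLM (𝕜 := ℂ) (n := Fin 4)) <| by
        rw [map_smul, map_one]; exact hTb
    have h00 := congr($hM 0 0)
    rw [γ0_mul_vγ_apply_zero_zero] at h00
    simp only [ofReal_sub, Matrix.smul_apply, one_apply_eq, smul_eq_mul, mul_one] at h00
    push_cast
    linear_combination 2 * h00
  obtain ⟨x, hx, hTx⟩ := T.exists_apply_eq_smul_of_mul_self_eq hTT hb
  have hμ : |v 0 - s| ≤ v 0 + s := abs_le.mpr ⟨by linarith, by linarith⟩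
  apply le_antisymm (hT.norm_le_of_mul_self_eq hμ hTT)
  simpa only [Complex.norm_real, Real.norm_of_nonneg (by positivity : 0 ≤ v 0 + s)] using
    T.norm_le_opNorm_of_apply_eq_smul hx hTx
end

section
/- Let v₁, v₂ : ℝ⁴ → ℝ⁴ be continuous maps such that for every x, η(v_i(x), v_i(x)) = 1 and v_i(x)₀ > 0 (two future-directed unit timelike vector fields on Minkowski space). Define the Doppler shift factor D(x) := η(v₁(x),v₂(x)) + √(η(v₁(x),v₂(x))² − 1), and suppose k := sup_{x∈ℝ⁴} D(x) < ∞. Then for every compactly supported continuous Ψ : ℝ⁴ → ℂ⁴ one has ∫_{ℝ⁴} Ψ(x)† γ₀·(v₁(x)·γ) Ψ(x) dx ≤ k · ∫_{ℝ⁴} Ψ(x)† γ₀·(v₂(x)·γ) Ψ(x) dx; that is, ‖Ψ‖_{n₁} ≤ k^{1/2}·‖Ψ‖_{n₂} for the spinor norms associated to the fundamental symmetries n_i(x) = v_i(x)·γ. -/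
open Matrix Complex ComplexOrder

/-- The Doppler shift factor between two future-directed unit timelike vectors. -/
noncomputable def DSF (u w : Fin 4 → ℝ) : ℝ :=
  mink u w + Real.sqrt ((mink u w) ^ 2 - 1)

/- ## Auxiliary lemmas -/

lemma cs3 (a1 a2 a3 b1 b2 b3 : ℝ) :
    (a1*b1+a2*b2+a3*b3)^2 ≤ (a1^2+a2^2+a3^2)*(b1^2+b2^2+b3^2) := by
  nlinarith [sq_nonneg (a1*b2-a2*b1), sq_nonneg (a1*b3-a3*b1), sq_nonneg (a2*b3-a3*b2)]

/-- Reverse Cauchy–Schwarz: two future unit timelike have η ≥ 1. -/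
lemma one_le_raw (u0 u1 u2 u3 w0 w1 w2 w3 : ℝ)
    (hu : u0^2 - u1^2 - u2^2 - u3^2 = 1) (hu0 : 0 < u0)
    (hw : w0^2 - w1^2 - w2^2 - w3^2 = 1) (hw0 : 0 < w0) :
    1 ≤ u0*w0 - u1*w1 - u2*w2 - u3*w3 := by
  set A := u1^2+u2^2+u3^2 with hA
  set B := w1^2+w2^2+w3^2 with hB
  set p := u1*w1+u2*w2+u3*w3 with hp
  have hA0 : 0 ≤ A := by positivity
  have hB0 : 0 ≤ B := by positivity
  have hcs : p^2 ≤ A*B := cs3 u1 u2 u3 w1 w2 w3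
  by_cases hcase : 1 + p ≤ 0
  · nlinarith [mul_pos hu0 hw0]
  · push_neg at hcase
    have h2p : 2*p ≤ A + B := by nlinarith [sq_nonneg (A-B)]
    have hsq : (1+p)^2 ≤ (u0*w0)^2 := by nlinarith
    nlinarith [mul_pos hu0 hw0]

/-- A vector Minkowski-orthogonal to a unit timelike vector is spacelike (or null-zero). -/
lemma perp_raw (w0 w1 w2 w3 y0 y1 y2 y3 : ℝ)
    (hw : w0^2 - w1^2 - w2^2 - w3^2 = 1) (hw0 : 0 < w0)
    (hp : y0*w0 = y1*w1 + y2*w2 + y3*w3) :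
    y0*y0 - y1*y1 - y2*y2 - y3*y3 ≤ 0 := by
  have h2 : (y0*w0)^2 = (y1*w1 + y2*w2 + y3*w3)^2 := by rw [hp]
  nlinarith [cs3 y1 y2 y3 w1 w2 w3, sq_nonneg (y1^2+y2^2+y3^2), mul_pos hw0 hw0]

/-- η of future unit timelike with future causal is nonnegative. -/
lemma nonneg_raw (w0 w1 w2 w3 x0 x1 x2 x3 : ℝ)
    (hw : w0^2 - w1^2 - w2^2 - w3^2 = 1) (hw0 : 0 < w0)
    (hx : 0 ≤ x0*x0 - x1*x1 - x2*x2 - x3*x3) (hx0 : 0 ≤ x0) :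
    0 ≤ w0*x0 - w1*x1 - w2*x2 - w3*x3 := by
  have hx' : 0 ≤ x0^2 - x1^2 - x2^2 - x3^2 := by nlinarith
  nlinarith [cs3 w1 w2 w3 x1 x2 x3, mul_pos hw0 hw0, mul_nonneg hw0.le hx0,
    sq_nonneg (w0*x0 - (w1*x1+w2*x2+w3*x3)), sq_nonneg (w0*x0 + (w1*x1+w2*x2+w3*x3))]

lemma final_step (a lam p m s : ℝ) (ha : 1 ≤ a) (hlam : 0 ≤ lam) (hm : 0 ≤ m)
    (hs0 : 0 ≤ s) (hs2 : s^2 = a^2 - 1)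
    (hd : (-(2*(p - a*lam)))^2 - 4*(a^2-1)*(lam^2 - m) ≤ 0) : p ≤ (a + s)*lam := by
  nlinarith [mul_nonneg hs0 hlam, sq_nonneg (s*lam - (p - a*lam)), sq_nonneg (s*lam + (p - a*lam)),
    mul_nonneg (mul_nonneg hm (by linarith : (0:ℝ) ≤ a)) (by linarith : (0:ℝ) ≤ a), mul_nonneg hm (sq_nonneg s)]

/-- Master coordinate inequality: `η(u,x) ≤ D(u,w)·η(w,x)` for future causal `x`. -/
lemma master (u0 u1 u2 u3 w0 w1 w2 w3 x0 x1 x2 x3 : ℝ)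
    (hu : u0*u0 - u1*u1 - u2*u2 - u3*u3 = 1) (hu0 : 0 < u0)
    (hw : w0*w0 - w1*w1 - w2*w2 - w3*w3 = 1) (hw0 : 0 < w0)
    (hx : 0 ≤ x0*x0 - x1*x1 - x2*x2 - x3*x3) (hx0 : 0 ≤ x0) :
    u0*x0 - u1*x1 - u2*x2 - u3*x3 ≤ (u0*w0 - u1*w1 - u2*w2 - u3*w3 + Real.sqrt ((u0*w0 - u1*w1 - u2*w2 - u3*w3)^2 - 1)) * (w0*x0 - w1*x1 - w2*x2 - w3*x3) := by
  have hu' : u0^2 - u1^2 - u2^2 - u3^2 = 1 := by linear_combination hu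
  have hw' : w0^2 - w1^2 - w2^2 - w3^2 = 1 := by linear_combination hw
  have ha : 1 ≤ u0*w0 - u1*w1 - u2*w2 - u3*w3 := one_le_raw u0 u1 u2 u3 w0 w1 w2 w3 hu' hu0 hw' hw0
  have hlam : 0 ≤ w0*x0 - w1*x1 - w2*x2 - w3*x3 := nonneg_raw w0 w1 w2 w3 x0 x1 x2 x3 hw' hw0 hx hx0
  have hs0 : 0 ≤ Real.sqrt ((u0*w0 - u1*w1 - u2*w2 - u3*w3)^2 - 1) := Real.sqrt_nonneg _
  have hs2 : (Real.sqrt ((u0*w0 - u1*w1 - u2*w2 - u3*w3)^2 - 1))^2 = (u0*w0 - u1*w1 - u2*w2 - u3*w3)^2 - 1 := Real.sq_sqrt (by nlinarith)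
  have hq : ∀ t : ℝ, 0 ≤ ((u0*w0 - u1*w1 - u2*w2 - u3*w3)^2 - 1) * (t * t) + (-(2*((u0*x0 - u1*x1 - u2*x2 - u3*x3) - (u0*w0 - u1*w1 - u2*w2 - u3*w3)*(w0*x0 - w1*x1 - w2*x2 - w3*x3)))) * t
      + ((w0*x0 - w1*x1 - w2*x2 - w3*x3)^2 - (x0*x0 - x1*x1 - x2*x2 - x3*x3)) := by
    intro t
    have hperp : (x0 - (w0*x0 - w1*x1 - w2*x2 - w3*x3)*w0 + t*(u0 - (u0*w0 - u1*w1 - u2*w2 - u3*w3)*w0))*w0 = (x1 - (w0*x0 - w1*x1 - w2*x2 - w3*x3)*w1 + t*(u1 - (u0*w0 - u1*w1 - u2*w2 - u3*w3)*w1))*w1 + (x2 - (w0*x0 - w1*x1 - w2*x2 - w3*x3)*w2 + t*(u2 - (u0*w0 - u1*w1 - u2*w2 - u3*w3)*w2))*w2 + (x3 - (w0*x0 - w1*x1 - w2*x2 - w3*x3)*w3 + t*(u3 - (u0*w0 - u1*w1 - u2*w2 - u3*w3)*w3))*w3 := by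
      linear_combination (-(w0*x0 - w1*x1 - w2*x2 - w3*x3) - t*(u0*w0 - u1*w1 - u2*w2 - u3*w3)) * hw
    have hyy := perp_raw w0 w1 w2 w3 _ _ _ _ hw' hw0 hperp
    have heq : ((u0*w0 - u1*w1 - u2*w2 - u3*w3)^2 - 1) * (t * t) + (-(2*((u0*x0 - u1*x1 - u2*x2 - u3*x3) - (u0*w0 - u1*w1 - u2*w2 - u3*w3)*(w0*x0 - w1*x1 - w2*x2 - w3*x3)))) * t + ((w0*x0 - w1*x1 - w2*x2 - w3*x3)^2 - (x0*x0 - x1*x1 - x2*x2 - x3*x3))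
        = -((x0 - (w0*x0 - w1*x1 - w2*x2 - w3*x3)*w0 + t*(u0 - (u0*w0 - u1*w1 - u2*w2 - u3*w3)*w0))*(x0 - (w0*x0 - w1*x1 - w2*x2 - w3*x3)*w0 + t*(u0 - (u0*w0 - u1*w1 - u2*w2 - u3*w3)*w0)) - (x1 - (w0*x0 - w1*x1 - w2*x2 - w3*x3)*w1 + t*(u1 - (u0*w0 - u1*w1 - u2*w2 - u3*w3)*w1))*(x1 - (w0*x0 - w1*x1 - w2*x2 - w3*x3)*w1 + t*(u1 - (u0*w0 - u1*w1 - u2*w2 - u3*w3)*w1)) - (x2 - (w0*x0 - w1*x1 - w2*x2 - w3*x3)*w2 + t*(u2 - (u0*w0 - u1*w1 - u2*w2 - u3*w3)*w2))*(x2 - (w0*x0 - w1*x1 - w2*x2 - w3*x3)*w2 + t*(u2 - (u0*w0 - u1*w1 - u2*w2 - u3*w3)*w2)) - (x3 - (w0*x0 - w1*x1 - w2*x2 - w3*x3)*w3 + t*(u3 - (u0*w0 - u1*w1 - u2*w2 - u3*w3)*w3))*(x3 - (w0*x0 - w1*x1 - w2*x2 - w3*x3)*w3 + t*(u3 - (u0*w0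 - u1*w1 - u2*w2 - u3*w3)*w3))) := by
      linear_combination (t^2) * hu + ((w0*x0 - w1*x1 - w2*x2 - w3*x3) + t*(u0*w0 - u1*w1 - u2*w2 - u3*w3))^2 * hw
    rw [heq]
    linarith
  have hd := discrim_le_zero hq
  rw [discrim] at hd
  exact final_step (u0*w0 - u1*w1 - u2*w2 - u3*w3) (w0*x0 - w1*x1 - w2*x2 - w3*x3) (u0*x0 - u1*x1 - u2*x2 - u3*x3) (x0*x0 - x1*x1 - x2*x2 - x3*x3) _ ha hlam hx hs0 hs2 (by linarith)

/-- Vector form of the master inequality. -/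
lemma mink_key (u w x : Fin 4 → ℝ) (hu : mink u u = 1) (hu0 : 0 < u 0)
    (hw : mink w w = 1) (hw0 : 0 < w 0) (hx : 0 ≤ mink x x) (hx0 : 0 ≤ x 0) :
    mink u x ≤ DSF u w * mink w x := by
  simp only [mink, DSF] at *
  exact master (u 0) (u 1) (u 2) (u 3) (w 0) (w 1) (w 2) (w 3) (x 0) (x 1) (x 2) (x 3)
    hu hu0 hw hw0 hx hx0

/- ## The Dirac current -/

noncomputable def J0 (ψ : Fin 4 → ℂ) : ℝ :=
  (ψ 0).re^2+(ψ 0).im^2+(ψ 1).re^2+(ψ 1).im^2+(ψ 2).re^2+(ψ 2).im^2+(ψ 3).re^2+(ψ 3).im^2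
noncomputable def K1 (ψ : Fin 4 → ℂ) : ℝ :=
  2*((ψ 0).re*(ψ 3).re + (ψ 0).im*(ψ 3).im + (ψ 1).re*(ψ 2).re + (ψ 1).im*(ψ 2).im)
noncomputable def K2 (ψ : Fin 4 → ℂ) : ℝ :=
  2*((ψ 0).re*(ψ 3).im - (ψ 0).im*(ψ 3).re - (ψ 1).re*(ψ 2).im + (ψ 1).im*(ψ 2).re)
noncomputable def K3 (ψ : Fin 4 → ℂ) : ℝ :=
  2*((ψ 0).re*(ψ 2).re + (ψ 0).im*(ψ 2).im - (ψ 1).re*(ψ 3).re - (ψ 1).im*(ψ 3).im)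

lemma g0vγ (v : Fin 4 → ℝ) : γ0 * vγ v =
    !![(v 0 : ℂ), 0, (v 3 : ℂ), (v 1 : ℂ) - I * v 2;
       0, (v 0 : ℂ), (v 1 : ℂ) + I * v 2, -(v 3 : ℂ);
       (v 3 : ℂ), (v 1 : ℂ) - I * v 2, (v 0 : ℂ), 0;
       (v 1 : ℂ) + I * v 2, -(v 3 : ℂ), 0, (v 0 : ℂ)] := by
  ext i j
  fin_cases i <;> fin_cases j <;>
    simp [γ0, γ1, γ2, γ3, vγ, Matrix.mul_apply, Fin.sum_univ_four] <;> ring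

set_option maxHeartbeats 1000000 in
lemma quad_eq (v : Fin 4 → ℝ) (ψ : Fin 4 → ℂ) :
    (star ψ ⬝ᵥ (γ0 * vγ v).mulVec ψ).re
      = v 0 * J0 ψ + v 1 * K1 ψ + v 2 * K2 ψ + v 3 * K3 ψ := by
  rw [g0vγ]
  simp [dotProduct, mulVec, Fin.sum_univ_four, J0, K1, K2, K3,
    Complex.add_re, Complex.add_im, Complex.mul_re, Complex.mul_im,
    Complex.sub_re, Complex.sub_im]
  ring

lemma J0_nonneg (ψ : Fin 4 → ℂ) : 0 ≤ J0 ψ := by simp only [J0]; positivity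

/-- The Dirac current is causal. -/
lemma causal (ψ : Fin 4 → ℂ) : 0 ≤ J0 ψ * J0 ψ - K1 ψ * K1 ψ - K2 ψ * K2 ψ - K3 ψ * K3 ψ := by
  have h : J0 ψ * J0 ψ - K1 ψ * K1 ψ - K2 ψ * K2 ψ - K3 ψ * K3 ψ
      = ((ψ 0).re^2+(ψ 0).im^2+(ψ 1).re^2+(ψ 1).im^2
          -(ψ 2).re^2-(ψ 2).im^2-(ψ 3).re^2-(ψ 3).im^2)^2
        + (2*((ψ 0).re*(ψ 2).im - (ψ 0).im*(ψ 2).re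
            + (ψ 1).re*(ψ 3).im - (ψ 1).im*(ψ 3).re))^2 := by
    simp only [J0, K1, K2, K3]; ring
  rw [h]; positivity

/-- Pointwise inequality between the two quadratic forms. -/
lemma pointwise (u w : Fin 4 → ℝ) (ψ : Fin 4 → ℂ)
    (hu : mink u u = 1) (hu0 : 0 < u 0) (hw : mink w w = 1) (hw0 : 0 < w 0) :
    (star ψ ⬝ᵥ (γ0 * vγ u).mulVec ψ).re ≤ DSF u w * (star ψ ⬝ᵥ (γ0 * vγ w).mulVec ψ).re := by
  rw [quad_eq, quad_eq]
  have key := mink_key u w ![J0 ψ, -K1 ψ, -K2 ψ, -K3 ψ] hu hu0 hw hw0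
    (by simpa [mink] using causal ψ) (by simpa using J0_nonneg ψ)
  simp only [mink, Matrix.cons_val_zero, Matrix.cons_val_one, Matrix.head_cons,
    Matrix.cons_val_two, Matrix.tail_cons, Matrix.cons_val_three] at key
  have h1 : u 0 * J0 ψ + u 1 * K1 ψ + u 2 * K2 ψ + u 3 * K3 ψ
      = u 0 * J0 ψ - u 1 * -K1 ψ - u 2 * -K2 ψ - u 3 * -K3 ψ := by ring
  have h2 : w 0 * J0 ψ + w 1 * K1 ψ + w 2 * K2 ψ + w 3 * K3 ψ
      = w 0 * J0 ψ - w 1 * -K1 ψ - w 2 * -K2 ψ - w 3 * -K3 ψ := by ring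
  rw [h1, h2]
  exact key

/-- The second quadratic form is nonnegative. -/
lemma quad_nonneg (w : Fin 4 → ℝ) (ψ : Fin 4 → ℂ) (hw : mink w w = 1) (hw0 : 0 < w 0) :
    0 ≤ (star ψ ⬝ᵥ (γ0 * vγ w).mulVec ψ).re := by
  rw [quad_eq]
  have key := nonneg_raw (w 0) (w 1) (w 2) (w 3) (J0 ψ) (-K1 ψ) (-K2 ψ) (-K3 ψ)
    (by simp only [mink] at hw; linear_combination hw) hw0
    (by nlinarith [causal ψ]) (J0_nonneg ψ)
  nlinarith [key]

open MeasureTheory in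
/-- If the relative Doppler shift between two future-directed unit timelike vector fields is
bounded on Minkowski space, with supremum `k`, then for every compactly supported continuous
spinor field `Ψ` one has `‖Ψ‖²_{n₁} ≤ k·‖Ψ‖²_{n₂}`. -/
theorem statement6 (v₁ v₂ : (Fin 4 → ℝ) → (Fin 4 → ℝ))
    (hc₁ : Continuous v₁) (hc₂ : Continuous v₂)
    (h₁ : ∀ x, mink (v₁ x) (v₁ x) = 1 ∧ 0 < v₁ x 0)
    (h₂ : ∀ x, mink (v₂ x) (v₂ x) = 1 ∧ 0 < v₂ x 0)
    (hbdd : BddAbove (Set.range fun x => DSF (v₁ x) (v₂ x)))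
    (Ψ : (Fin 4 → ℝ) → (Fin 4 → ℂ)) (hΨc : Continuous Ψ) (hΨs : HasCompactSupport Ψ) :
    (∫ x : Fin 4 → ℝ, (star (Ψ x) ⬝ᵥ (γ0 * vγ (v₁ x)).mulVec (Ψ x)).re) ≤
      (⨆ x : Fin 4 → ℝ, DSF (v₁ x) (v₂ x)) *
        ∫ x : Fin 4 → ℝ, (star (Ψ x) ⬝ᵥ (γ0 * vγ (v₂ x)).mulVec (Ψ x)).re := by
  set k := ⨆ x : Fin 4 → ℝ, DSF (v₁ x) (v₂ x) with hk
  have hDk : ∀ x, DSF (v₁ x) (v₂ x) ≤ k := fun x => le_ciSup hbdd x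
  have hg0 : ∀ x, 0 ≤ (star (Ψ x) ⬝ᵥ (γ0 * vγ (v₂ x)).mulVec (Ψ x)).re :=
    fun x => quad_nonneg (v₂ x) (Ψ x) (h₂ x).1 (h₂ x).2
  have hpt : ∀ x, (star (Ψ x) ⬝ᵥ (γ0 * vγ (v₁ x)).mulVec (Ψ x)).re ≤
      k * (star (Ψ x) ⬝ᵥ (γ0 * vγ (v₂ x)).mulVec (Ψ x)).re := by
    intro x
    exact le_trans (pointwise (v₁ x) (v₂ x) (Ψ x) (h₁ x).1 (h₁ x).2 (h₂ x).1 (h₂ x).2)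
      (mul_le_mul_of_nonneg_right (hDk x) (hg0 x))
  -- continuity and compact support of the integrands
  have hre : ∀ i : Fin 4, Continuous fun x => (Ψ x i).re :=
    fun i => Complex.continuous_re.comp ((continuous_apply i).comp hΨc)
  have him : ∀ i : Fin 4, Continuous fun x => (Ψ x i).im :=
    fun i => Complex.continuous_im.comp ((continuous_apply i).comp hΨc)
  have hcont : ∀ (v : (Fin 4 → ℝ) → (Fin 4 → ℝ)), Continuous v →
      Continuous fun x => (star (Ψ x) ⬝ᵥ (γ0 * vγ (v x)).mulVec (Ψ x)).re := by
    intro v hv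
    have hfe : (fun x => (star (Ψ x) ⬝ᵥ (γ0 * vγ (v x)).mulVec (Ψ x)).re)
        = fun x => v x 0 * J0 (Ψ x) + v x 1 * K1 (Ψ x) + v x 2 * K2 (Ψ x) + v x 3 * K3 (Ψ x) :=
      funext fun x => quad_eq (v x) (Ψ x)
    rw [hfe]
    simp only [J0, K1, K2, K3]
    have hva : ∀ i : Fin 4, Continuous fun x => v x i := fun i => (continuous_apply i).comp hv
    fun_prop
  have hsupp : ∀ (v : (Fin 4 → ℝ) → (Fin 4 → ℝ)),
      Function.support (fun x => (star (Ψ x) ⬝ᵥ (γ0 * vγ (v x)).mulVec (Ψ x)).re)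
        ⊆ Function.support Ψ := by
    intro v x hx
    simp only [Function.mem_support] at hx ⊢
    intro h0
    apply hx
    rw [h0]
    simp
  have hint : ∀ (v : (Fin 4 → ℝ) → (Fin 4 → ℝ)), Continuous v →
      Integrable (fun x => (star (Ψ x) ⬝ᵥ (γ0 * vγ (v x)).mulVec (Ψ x)).re) := by
    intro v hv
    exact (hcont v hv).integrable_of_hasCompactSupport (hΨs.mono (hsupp v))
  calc (∫ x : Fin 4 → ℝ, (star (Ψ x) ⬝ᵥ (γ0 * vγ (v₁ x)).mulVec (Ψ x)).re)
      ≤ ∫ x : Fin 4 → ℝ, k * (star (Ψ x) ⬝ᵥ (γ0 * vγ (v₂ x)).mulVec (Ψ x)).re := by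
        exact integral_mono (hint v₁ hc₁) ((hint v₂ hc₂).const_mul k) hpt
    _ = k * ∫ x : Fin 4 → ℝ, (star (Ψ x) ⬝ᵥ (γ0 * vγ (v₂ x)).mulVec (Ψ x)).re := by
        exact integral_const_mul k _
end

section
/- Let p, q ≥ 0, N = p + q, J = diag(I_p, −I_q) ∈ M_N(ℂ), and let L ∈ M_N(ℂ) be pseudo-unitary with respect to J, i.e. L†·J·L = J (where L† is the conjugate transpose). Then the number of eigenvalues of L of modulus strictly greater than 1, counted with algebraic multiplicity (i.e. the number of roots z of the characteristic polynomial of L with |z| > 1, counted with multiplicity), is at most min(p,q). -/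
/-!
`B(x, y) = x† J y` is invariant under `L`. Expanding `B(Lx, Ly) = B(x, y)` on generalized
eigenvectors and inducting on their heights shows that the generalized eigenspaces for `λ` and `μ`
are `B`-orthogonal as soon as `conj λ · μ ≠ 1`, which holds when `|λ|, |μ| > 1`. Hence the sum `V`
of the generalized eigenspaces of the eigenvalues of modulus `> 1` is totally isotropic, and its
dimension is the number of those eigenvalues counted with multiplicity. Since `B(x, x)` is
`Σ_{i<p} |xᵢ|² - Σ_{i≥p} |xᵢ|²`, a vector of `V` vanishing on the first `p` (or the last `q`)
coordinates is zero, so both coordinate projections are injective on `V` and `dim V ≤ min p q`.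
-/

open Matrix Polynomial Module

namespace Submodule

variable {K E : Type*} [Field K] [AddCommGroup E] [Module K E] [FiniteDimensional K E]

theorem finrank_finset_sup_of_supIndep {ι : Type*} [DecidableEq ι] (s : Finset ι)
    (W : ι → Submodule K E) (h : s.SupIndep W) :
    finrank K ↥(s.sup W) = ∑ i ∈ s, finrank K ↥(W i) := by
  induction s using Finset.induction_on with
  | empty => simp
  | @insert a s ha ih =>
    have hdisj : Disjoint (W a) (s.sup W) := h (Finset.subset_insert a s) (s.mem_insert_self a) ha
    have := finrank_sup_add_finrank_inf_eq (W a) (s.sup W)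
    rw [disjoint_iff.mp hdisj, finrank_bot, add_zero] at this
    rw [Finset.sup_insert, Finset.sum_insert ha, this, ih (h.subset (s.subset_insert a))]

omit [FiniteDimensional K E] in
theorem finrank_le_of_disjoint_ker {F : Type*} [AddCommGroup F] [Module K F]
    [FiniteDimensional K F] {V : Submodule K E} (g : E →ₗ[K] F) (h : Disjoint V (LinearMap.ker g)) :
    finrank K V ≤ finrank K F :=
  LinearMap.finrank_le_finrank_of_injective (LinearMap.injective_domRestrict_iff.mpr h)

end Submodule

theorem LinearMap.card_roots_charpoly_filter_eq_finrank {K E : Type*} [Field K] [AddCommGroup E]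
    [Module K E] [FiniteDimensional K E] [DecidableEq K] (φ : Module.End K E) (P : K → Prop)
    [DecidablePred P] :
    (φ.charpoly.roots.filter P).card =
      finrank K ↥((φ.charpoly.roots.toFinset.filter P).sup φ.maxGenEigenspace) := by
  rw [Submodule.finrank_finset_sup_of_supIndep _ _ (φ.independent_maxGenEigenspace.supIndep' _),
    ← Multiset.toFinset_sum_count_eq, Multiset.toFinset_filter]
  refine Finset.sum_congr rfl fun z hz => ?_
  rw [Multiset.count_filter_of_pos (Finset.mem_filter.mp hz).2, count_roots,
    LinearMap.finrank_maxGenEigenspace_eq]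

section Sesquilinear

variable {K E : Type*} [Field K] [AddCommGroup E] [Module K E] {σ : K →+* K}
  (B : E →ₛₗ[σ] E →ₗ[K] K) {f : Module.End K E}

theorem LinearMap.apply_eq_zero_of_pow_sub_smul_apply_eq_zero (hf : ∀ x y, B (f x) (f y) = B x y)
    {lam mu : K} (hne : σ lam * mu ≠ 1) :
    ∀ (a b : ℕ) (x y : E), ((f - lam • 1) ^ a) x = 0 → ((f - mu • 1) ^ b) y = 0 → B x y = 0 := by
  intro a
  induction a with
  | zero => intro b x y hx _; simp_all
  | succ a iha =>
    intro b
    induction b with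
    | zero => intro x y _ hy; simp_all
    | succ b ihb =>
      intro x y hx hy
      have hx' : ((f - lam • 1) ^ a) ((f - lam • 1) x) = 0 := by
        rwa [← Module.End.mul_apply, ← pow_succ]
      have hy' : ((f - mu • 1) ^ b) ((f - mu • 1) y) = 0 := by
        rwa [← Module.End.mul_apply, ← pow_succ]
      -- writing `f x = λ x + (f - λ) x`, all cross terms of `B (f x) (f y)` vanish by induction
      have key := hf x y
      rw [show f x = lam • x + (f - lam • 1) x by simp, show f y = mu • y + (f - mu • 1) y by simp]
        at key
      simp only [map_add, LinearMap.add_apply, LinearMap.map_smulₛₗ₂, map_smul, smul_eq_mul,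
        ihb x _ hx hy', iha _ _ _ hx' hy, iha _ _ _ hx' hy'] at key
      have : (σ lam * mu - 1) * B x y = 0 := by linear_combination key
      exact (mul_eq_zero.mp this).resolve_left (sub_ne_zero.mpr hne)

theorem LinearMap.apply_eq_zero_of_mem_maxGenEigenspace (hf : ∀ x y, B (f x) (f y) = B x y)
    {lam mu : K} (hne : σ lam * mu ≠ 1) {x y : E} (hx : x ∈ f.maxGenEigenspace lam)
    (hy : y ∈ f.maxGenEigenspace mu) : B x y = 0 := by
  obtain ⟨a, ha⟩ := (f.mem_maxGenEigenspace lam x).mp hx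
  obtain ⟨b, hb⟩ := (f.mem_maxGenEigenspace mu y).mp hy
  exact B.apply_eq_zero_of_pow_sub_smul_apply_eq_zero hf hne a b x y ha hb

theorem LinearMap.apply_eq_zero_of_mem_finset_sup {ι : Type*} (s : Finset ι)
    (W : ι → Submodule K E) (h : ∀ i ∈ s, ∀ j ∈ s, ∀ x ∈ W i, ∀ y ∈ W j, B x y = 0) {x y : E}
    (hx : x ∈ s.sup W) (hy : y ∈ s.sup W) : B x y = 0 := by
  have hker (j) (hj : j ∈ s) (y) (hy : y ∈ W j) : s.sup W ≤ LinearMap.ker (B.flip y) :=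
    Finset.sup_le fun i hi x hx => h i hi j hj x hx y hy
  have hortho : s.sup W ≤ (s.sup W).orthogonalBilin B := Finset.sup_le fun j hj y hy =>
    Submodule.mem_orthogonalBilin_iff.mpr fun _ hx => hker j hj y hy hx
  exact Submodule.mem_orthogonalBilin_iff.mp (hortho hy) x hx

end Sesquilinear

theorem Matrix.toLinearMapₛₗ₂'_starRingEnd_apply {R n : Type*} [CommRing R] [StarRing R]
    [Fintype n] [DecidableEq n] (A : Matrix n n R) (x y : n → R) :
    toLinearMapₛₗ₂' R (starRingEnd R) (RingHom.id R) A x y = star x ⬝ᵥ (A *ᵥ y) := by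
  simp only [toLinearMapₛₗ₂'_apply, dotProduct, mulVec, Finset.mul_sum, smul_eq_mul,
    RingHom.id_apply, starRingEnd_apply, Pi.star_apply]
  exact Fintype.sum_congr _ _ fun i => Fintype.sum_congr _ _ fun j => by ring

theorem Matrix.toLinearMapₛₗ₂'_mulVec_mulVec {R n : Type*} [CommRing R] [StarRing R]
    [Fintype n] [DecidableEq n] {A L : Matrix n n R} (hL : Lᴴ * A * L = A) (x y : n → R) :
    toLinearMapₛₗ₂' R (starRingEnd R) (RingHom.id R) A (L *ᵥ x) (L *ᵥ y) =
      toLinearMapₛₗ₂' R (starRingEnd R) (RingHom.id R) A x y := by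
  rw [toLinearMapₛₗ₂'_starRingEnd_apply, toLinearMapₛₗ₂'_starRingEnd_apply, star_mulVec,
    mulVec_mulVec, dotProduct_mulVec, vecMul_vecMul, ← Matrix.mul_assoc, hL, dotProduct_mulVec]

theorem sum_norm_sq_eq_zero_iff {ι E : Type*} [Fintype ι] [NormedAddCommGroup E] (v : ι → E) :
    ∑ i, ‖v i‖ ^ 2 = 0 ↔ v = 0 := by
  simp [Finset.sum_eq_zero_iff_of_nonneg, funext_iff]

def signatureMatrix (p q : ℕ) : Matrix (Fin (p + q)) (Fin (p + q)) ℂ :=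
  diagonal fun i => if (i : ℕ) < p then 1 else -1

theorem star_dotProduct_signatureMatrix_mulVec (p q : ℕ) (x : Fin (p + q) → ℂ) :
    star x ⬝ᵥ (signatureMatrix p q *ᵥ x) =
      ((∑ j, ‖x (Fin.castAdd q j)‖ ^ 2 - ∑ j, ‖x (Fin.natAdd p j)‖ ^ 2 : ℝ) : ℂ) := by
  simp [signatureMatrix, dotProduct, mulVec_diagonal, Fin.sum_univ_add, Complex.conj_mul']
  ring

theorem comp_castAdd_eq_zero_iff_of_isotropic {p q : ℕ} {x : Fin (p + q) → ℂ}
    (hx : star x ⬝ᵥ (signatureMatrix p q *ᵥ x) = 0) :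
    x ∘ Fin.castAdd q = 0 ↔ x ∘ Fin.natAdd p = 0 := by
  rw [star_dotProduct_signatureMatrix_mulVec, Complex.ofReal_eq_zero, sub_eq_zero] at hx
  rw [← sum_norm_sq_eq_zero_iff, ← sum_norm_sq_eq_zero_iff]
  exact hx ▸ Iff.rfl

theorem finrank_le_min_of_isotropic {p q : ℕ} (V : Submodule ℂ (Fin (p + q) → ℂ))
    (hV : ∀ x ∈ V, star x ⬝ᵥ (signatureMatrix p q *ᵥ x) = 0) : finrank ℂ V ≤ min p q := by
  have eq_zero {x : Fin (p + q) → ℂ} (h₁ : x ∘ Fin.castAdd q = 0) (h₂ : x ∘ Fin.natAdd p = 0) :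
      x = 0 :=
    funext fun i => Fin.addCases (congrFun h₁) (congrFun h₂) i
  refine le_min ?_ ?_
  · simpa using Submodule.finrank_le_of_disjoint_ker (LinearMap.funLeft ℂ ℂ (Fin.castAdd q))
      (Submodule.disjoint_def.mpr fun x hx hker =>
        eq_zero hker ((comp_castAdd_eq_zero_iff_of_isotropic (hV x hx)).mp hker))
  · simpa using Submodule.finrank_le_of_disjoint_ker (LinearMap.funLeft ℂ ℂ (Fin.natAdd p))
      (Submodule.disjoint_def.mpr fun x hx hker =>
        eq_zero ((comp_castAdd_eq_zero_iff_of_isotropic (hV x hx)).mpr hker) hker)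

/-- If `L ∈ M_{p+q}(ℂ)` is pseudo-unitary with respect to `J = diag(I_p, −I_q)`
(`L†JL = J`), then the number of eigenvalues of `L` of modulus strictly greater than `1`,
counted with algebraic multiplicity, is at most `min p q`. -/
theorem statement14 (p q : ℕ) (L : Matrix (Fin (p + q)) (Fin (p + q)) ℂ)
    (hL : Lᴴ * Matrix.diagonal (fun i : Fin (p + q) => if (i : ℕ) < p then (1 : ℂ) else -1) * L
        = Matrix.diagonal (fun i : Fin (p + q) => if (i : ℕ) < p then (1 : ℂ) else -1)) :
    (L.charpoly.roots.filter fun z => 1 < ‖z‖).card ≤ min p q := by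
  classical
  set B := toLinearMapₛₗ₂' ℂ (starRingEnd ℂ) (RingHom.id ℂ) (signatureMatrix p q)
  have hf (x y : Fin (p + q) → ℂ) : B (toLin' L x) (toLin' L y) = B x y := by
    simpa only [toLin'_apply] using
      toLinearMapₛₗ₂'_mulVec_mulVec (A := signatureMatrix p q) hL x y
  have hne {lam mu : ℂ} (hlam : 1 < ‖lam‖) (hmu : 1 < ‖mu‖) : starRingEnd ℂ lam * mu ≠ 1 := by
    refine ne_of_apply_ne norm (ne_of_gt ?_)
    rw [norm_mul, Complex.norm_conj, norm_one]
    exact one_lt_mul_of_le_of_lt hlam.le hmu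
  rw [← charpoly_toLin', (toLin' L).card_roots_charpoly_filter_eq_finrank]
  refine finrank_le_min_of_isotropic _ fun x hx => ?_
  rw [← toLinearMapₛₗ₂'_starRingEnd_apply]
  refine B.apply_eq_zero_of_mem_finset_sup _ _ (fun lam hlam mu hmu x hx y hy => ?_) hx hx
  exact B.apply_eq_zero_of_mem_maxGenEigenspace hf
    (hne (Finset.mem_filter.mp hlam).2 (Finset.mem_filter.mp hmu).2) hx hy
end

section
/- Let J ∈ M_N(ℂ) be an invertible Hermitian matrix and let A ∈ M_N(ℂ) be diagonalizable and pseudo-unitary with respect to J, i.e. A†·J·A = J. Then the spectral radius of the linear endomorphism Ad_A : X ↦ A·X·A⁻¹ of M_N(ℂ) equals the square of the spectral radius of A: max{|μ| : μ ∈ σ(Ad_A)} = (max{|λ| : λ ∈ σ(A)})². -/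
/-!
Diagonalize `A = P D P⁻¹` with `D = diagonal d`. Then `Ad_A` is conjugate to `Ad_D`, which is
diagonal on the matrix units `E_ij` with eigenvalues `d i / d j`, so
`ρ(Ad_A) = max |d i| · max |d j|⁻¹ = ρ(A) ρ(A⁻¹)`. Pseudo-unitarity gives `A⁻¹ = J⁻¹ Aᴴ J`, so
`A⁻¹` is similar to `Aᴴ`, whose spectrum is the complex conjugate of `σ(A)`; hence
`ρ(A⁻¹) = ρ(A)`.
-/

open Matrix

/-- Conjugation `Ad_A : X ↦ A·X·A⁻¹` as a linear endomorphism of `M_N(ℂ)`. -/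
noncomputable def Ad (N : ℕ) (A : Matrix (Fin N) (Fin N) ℂ) :
    Module.End ℂ (Matrix (Fin N) (Fin N) ℂ) where
  toFun X := A * X * A⁻¹
  map_add' X Y := by simp [Matrix.mul_add, Matrix.add_mul]
  map_smul' c X := by simp [Matrix.mul_smul, Matrix.smul_mul]

theorem spectrum_star {R A : Type*} [CommRing R] [StarRing R] [Ring A] [StarRing A]
    [Algebra R A] [StarModule R A] (a : A) :
    spectrum R (star a) = star (spectrum R a) := by
  ext r
  rw [Set.mem_star, spectrum.mem_iff, spectrum.mem_iff, not_iff_not, ← isUnit_star,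
    star_sub, algebraMap_star_comm, star_star]

theorem spectralRadius_star {𝕜 A : Type*} [NormedField 𝕜] [StarRing 𝕜] [NormedStarGroup 𝕜]
    [Ring A] [StarRing A] [Algebra 𝕜 A] [StarModule 𝕜 A] (a : A) :
    spectralRadius 𝕜 (star a) = spectralRadius 𝕜 a := by
  rw [spectralRadius, spectralRadius, spectrum_star, ← Set.image_star, iSup_image]
  simp only [nnnorm_star]

namespace Matrix

variable {n α : Type*} [Fintype n] [DecidableEq n]

theorem inv_diagonal_of_ne_zero [Field α] (d : n → α) (hd : ∀ i, d i ≠ 0) :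
    (diagonal d)⁻¹ = diagonal fun i => (d i)⁻¹ :=
  inv_eq_left_inv <| by
    rw [diagonal_mul_diagonal, ← diagonal_one]
    exact congrArg diagonal (funext fun i => inv_mul_cancel₀ (hd i))

def IsPseudoUnitary [CommRing α] [StarRing α] (J A : Matrix n n α) : Prop :=
  Aᴴ * J * A = J

namespace IsPseudoUnitary

theorem left_inv [CommRing α] [StarRing α] {J A : Matrix n n α} (hJ : IsUnit J.det)
    (hA : IsPseudoUnitary J A) : J⁻¹ * Aᴴ * J * A = 1 := by
  rw [show J⁻¹ * Aᴴ * J * A = J⁻¹ * (Aᴴ * J * A) by simp only [Matrix.mul_assoc], hA,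
    nonsing_inv_mul J hJ]

theorem isUnit [CommRing α] [StarRing α] {J A : Matrix n n α} (hJ : IsUnit J.det)
    (hA : IsPseudoUnitary J A) : IsUnit A :=
  (isUnit_iff_isUnit_det A).2 (isUnit_det_of_left_inverse (hA.left_inv hJ))

theorem spectralRadius_inv {𝕜 : Type*} [NormedField 𝕜] [StarRing 𝕜] [NormedStarGroup 𝕜]
    {J A : Matrix n n 𝕜} (hJ : IsUnit J.det) (hA : IsPseudoUnitary J A) :
    spectralRadius 𝕜 A⁻¹ = spectralRadius 𝕜 A := by
  let u := nonsingInvUnit J hJ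
  have hinv : A⁻¹ = (↑u⁻¹ : Matrix n n 𝕜) * Aᴴ * u := by
    rw [coe_units_inv]
    exact inv_eq_left_inv (hA.left_inv hJ)
  rw [spectralRadius, hinv, spectrum.units_conjugate', ← star_eq_conjTranspose, ← spectralRadius,
    spectralRadius_star]

end IsPseudoUnitary

end Matrix

namespace Ad

variable {N : ℕ}

theorem apply (A X : Matrix (Fin N) (Fin N) ℂ) : Ad N A X = A * X * A⁻¹ := rfl

noncomputable def monoidHom (N : ℕ) :
    Matrix (Fin N) (Fin N) ℂ →* Module.End ℂ (Matrix (Fin N) (Fin N) ℂ) where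
  toFun := Ad N
  map_one' := by
    ext X : 1
    simp [apply]
  map_mul' A B := by
    ext X : 1
    simp only [Module.End.mul_apply, apply, Matrix.mul_inv_rev]
    noncomm_ring

theorem spectrum_units_conjugate (u : (Matrix (Fin N) (Fin N) ℂ)ˣ)
    (A : Matrix (Fin N) (Fin N) ℂ) :
    spectrum ℂ (Ad N (u * A * (↑u⁻¹ : Matrix (Fin N) (Fin N) ℂ))) = spectrum ℂ (Ad N A) := by
  have h : Ad N (u * A * (↑u⁻¹ : Matrix (Fin N) (Fin N) ℂ)) =
      ↑(Units.map (monoidHom N) u) * Ad N A * ↑(Units.map (monoidHom N) u)⁻¹ := by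
    change monoidHom N _ = _
    rw [map_mul, map_mul]
    rfl
  rw [h, spectrum.units_conjugate]

theorem diagonal_eq_toLin (d : Fin N → ℂ) (hd : ∀ i, d i ≠ 0) :
    Ad N (diagonal d) = toLin (stdBasis ℂ (Fin N) (Fin N)) (stdBasis ℂ (Fin N) (Fin N))
      (diagonal fun p => d p.1 * (d p.2)⁻¹) := by
  refine (stdBasis ℂ (Fin N) (Fin N)).ext fun ⟨i, j⟩ => ?_
  rw [toLin_self]
  ext a b
  simp [stdBasis_eq_single, apply, inv_diagonal_of_ne_zero d hd, diagonal_apply, diagonal_mul,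
    mul_diagonal, single_apply]
  grind

theorem spectrum_diagonal (d : Fin N → ℂ) (hd : ∀ i, d i ≠ 0) :
    spectrum ℂ (Ad N (diagonal d)) = Set.range fun p : Fin N × Fin N => d p.1 * (d p.2)⁻¹ := by
  rw [diagonal_eq_toLin d hd, spectrum_toLin, _root_.spectrum_diagonal]

theorem spectralRadius_eq_mul_of_diagonalizable {A P : Matrix (Fin N) (Fin N) ℂ}
    {d : Fin N → ℂ} (hP : IsUnit P.det) (hAd : A = P * diagonal d * P⁻¹) (hA : IsUnit A) :
    spectralRadius ℂ (Ad N A) = spectralRadius ℂ A * spectralRadius ℂ A⁻¹ := by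
  let u := nonsingInvUnit P hP
  replace hAd : A = u * diagonal d * (↑u⁻¹ : Matrix (Fin N) (Fin N) ℂ) := by
    rwa [coe_units_inv]
  have hσ : spectrum ℂ A = Set.range d := by
    rw [hAd, spectrum.units_conjugate, _root_.spectrum_diagonal]
  have hd : ∀ i, d i ≠ 0 := fun i hi =>
    (spectrum.zero_notMem_iff ℂ).2 hA (hσ ▸ hi ▸ Set.mem_range_self i)
  have hσinv : spectrum ℂ A⁻¹ = Set.range fun i => (d i)⁻¹ := by
    rw [← hA.unit_spec, ← coe_units_inv, ← spectrum.map_inv, hA.unit_spec, hσ, Set.inv_range]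
  rw [spectralRadius, spectralRadius, spectralRadius, hAd, spectrum_units_conjugate,
    spectrum_diagonal d hd, ← hAd, hσ, hσinv, iSup_range, iSup_range, iSup_range, iSup_prod,
    ENNReal.iSup_mul]
  simp only [nnnorm_mul, ENNReal.coe_mul, ENNReal.mul_iSup]

end Ad

theorem statement15_general (N : ℕ) (J A : Matrix (Fin N) (Fin N) ℂ)
    (hJu : IsUnit J.det)
    (hdiag : ∃ (P : Matrix (Fin N) (Fin N) ℂ) (d : Fin N → ℂ),
      IsUnit P.det ∧ A = P * Matrix.diagonal d * P⁻¹)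
    (hA : Aᴴ * J * A = J) :
    spectralRadius ℂ (Ad N A) = (spectralRadius ℂ A) ^ 2 := by
  obtain ⟨P, d, hP, hAd⟩ := hdiag
  have hpu : IsPseudoUnitary J A := hA
  rw [Ad.spectralRadius_eq_mul_of_diagonalizable hP hAd (hpu.isUnit hJu),
    hpu.spectralRadius_inv hJu, sq]

/-- If `J ∈ M_N(ℂ)` is an invertible Hermitian matrix and `A` is diagonalizable and
pseudo-unitary with respect to `J` (`A†JA = J`), then the spectral radius of
`Ad_A : X ↦ AXA⁻¹` equals the square of the spectral radius of `A`. -/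
theorem statement15 (N : ℕ) (J A : Matrix (Fin N) (Fin N) ℂ)
    (hJh : J.IsHermitian) (hJu : IsUnit J.det)
    (hdiag : ∃ (P : Matrix (Fin N) (Fin N) ℂ) (d : Fin N → ℂ),
      IsUnit P.det ∧ A = P * Matrix.diagonal d * P⁻¹)
    (hA : Aᴴ * J * A = J) :
    spectralRadius ℂ (Ad N A) = (spectralRadius ℂ A) ^ 2 :=
  statement15_general N J A hJu hdiag hA
end

section
/- Let p, q ≥ 0, n = p + q, J = diag(I_p, −I_q) ∈ M_n(ℝ), and let L ∈ M_n(ℝ) be symmetric positive definite with Lᵀ·J·L = J. Then: (a) the number of eigenvalues of L strictly greater than 1, counted with multiplicity, is at most min(p,q); and (b) the product of all eigenvalues of L that are strictly greater than 1, counted with multiplicity, is at most r(L)^{min(p,q)}, where r(L) is the largest eigenvalue of L. -/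
/-! For eigenvectors `L u = a u`, `L v = b v`, the relation `LᵀJL = J` gives
`uᵀ J v = (L u)ᵀ J (L v) = a b · uᵀ J v`, so `uᵀ J v = 0` unless `a b = 1`. Hence the eigenvectors
with eigenvalue `> 1` span a subspace on which the form `vᵀ J v` vanishes identically. Such a
subspace meets the `p`-dimensional positive and the `q`-dimensional negative coordinate subspaces
trivially, so its dimension is at most `min p q`. For the product, `det L = 1` forces the largest
eigenvalue to be at least `1`, and each eigenvalue `> 1` is bounded by it. -/

open Matrix Finset

section Isotropic

variable {ι : Type*} [Fintype ι]

lemma dotProduct_mulVec_span_eq_zero {M : Matrix ι ι ℝ} {s : Set (ι → ℝ)}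
    (h : ∀ x ∈ s, ∀ y ∈ s, x ⬝ᵥ M *ᵥ y = 0) {x y : ι → ℝ}
    (hx : x ∈ Submodule.span ℝ s) (hy : y ∈ Submodule.span ℝ s) : x ⬝ᵥ M *ᵥ y = 0 := by
  induction hx, hy using Submodule.span_induction₂ with
  | mem_mem x y hx hy => exact h x hx y hy
  | zero_left y _ => simp
  | zero_right x _ => simp
  | add_left x₁ x₂ y _ _ _ h₁ h₂ => simp [add_dotProduct, h₁, h₂]
  | add_right x y₁ y₂ _ _ _ h₁ h₂ => simp [mulVec_add, h₁, h₂]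
  | smul_left c x y _ _ h => simp [h]
  | smul_right c x y _ _ h => simp [mulVec_smul, h]

lemma dotProduct_mulVec_eq_zero_of_mul_ne_one {L M : Matrix ι ι ℝ}
    (hL : Lᵀ * M * L = M) {a b : ℝ} {x y : ι → ℝ} (hx : L *ᵥ x = a • x) (hy : L *ᵥ y = b • y)
    (hab : a * b ≠ 1) : x ⬝ᵥ M *ᵥ y = 0 := by
  have h : x ⬝ᵥ M *ᵥ y = (a * b) * (x ⬝ᵥ M *ᵥ y) := calc
    x ⬝ᵥ M *ᵥ y = x ᵥ* Lᵀ ⬝ᵥ M *ᵥ (L *ᵥ y) := by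
      rw [← dotProduct_mulVec, mulVec_mulVec, mulVec_mulVec, hL]
    _ = (a * b) * (x ⬝ᵥ M *ᵥ y) := by
      rw [vecMul_transpose, hx, hy, mulVec_smul, smul_dotProduct, dotProduct_smul, smul_eq_mul,
        smul_eq_mul, mul_assoc]
  have : (1 - a * b) * (x ⬝ᵥ M *ᵥ y) = 0 := by linarith
  exact (mul_eq_zero.mp this).resolve_left (sub_ne_zero.mpr hab.symm)

variable [DecidableEq ι]

lemma dotProduct_diagonal_mulVec_self (g v : ι → ℝ) :
    v ⬝ᵥ diagonal g *ᵥ v = ∑ k, g k * v k ^ 2 := by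
  simp only [dotProduct, mulVec_diagonal]
  exact sum_congr rfl fun k _ => by ring

lemma eq_zero_of_dotProduct_diagonal_mulVec_self_eq_zero {g v : ι → ℝ}
    (hv : ∀ k, g k ≤ 0 → v k = 0) (h : v ⬝ᵥ diagonal g *ᵥ v = 0) : v = 0 := by
  have hnonneg : ∀ k ∈ univ, 0 ≤ g k * v k ^ 2 := fun k _ => by
    rcases le_or_gt (g k) 0 with hk | hk
    · simp [hv k hk]
    · positivity
  rw [dotProduct_diagonal_mulVec_self, sum_eq_zero_iff_of_nonneg hnonneg] at h
  funext k
  rcases le_or_gt (g k) 0 with hk | hk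
  · exact hv k hk
  · simpa [hk.ne'] using h k (mem_univ k)

lemma finrank_le_card_nonpos_of_isotropic (g : ι → ℝ) (W : Submodule ℝ (ι → ℝ))
    (hW : ∀ v ∈ W, v ⬝ᵥ diagonal g *ᵥ v = 0) :
    Module.finrank ℝ W ≤ #{k | g k ≤ 0} := by
  let C := {k // g k ≤ 0}
  let restrict : W →ₗ[ℝ] C → ℝ := LinearMap.funLeft ℝ ℝ Subtype.val ∘ₗ W.subtype
  have hinj : Function.Injective restrict := by
    rw [← LinearMap.ker_eq_bot, LinearMap.ker_eq_bot']
    intro v hv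
    refine Subtype.ext (eq_zero_of_dotProduct_diagonal_mulVec_self_eq_zero (fun k hk => ?_)
      (hW v v.2))
    exact congrFun hv ⟨k, hk⟩
  simpa [C, Fintype.card_subtype] using LinearMap.finrank_le_finrank_of_injective hinj

end Isotropic

namespace Matrix

variable {ι : Type*} [Fintype ι] [DecidableEq ι]

lemma IsHermitian.linearIndependent_eigenvectorBasis {A : Matrix ι ι ℝ} (hA : A.IsHermitian) :
    LinearIndependent ℝ fun i => ⇑(hA.eigenvectorBasis i) :=
  hA.eigenvectorBasis.toBasis.linearIndependent.map' (WithLp.linearEquiv 2 ℝ (ι → ℝ)).toLinearMap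
    (WithLp.linearEquiv 2 ℝ (ι → ℝ)).ker

lemma IsHermitian.card_one_lt_eigenvalues_le {A : Matrix ι ι ℝ} (hA : A.IsHermitian)
    {g : ι → ℝ} (h : Aᵀ * diagonal g * A = diagonal g) :
    #{i | 1 < hA.eigenvalues i} ≤ #{k | g k ≤ 0} := by
  let b : {i // 1 < hA.eigenvalues i} → ι → ℝ := fun i => ⇑(hA.eigenvectorBasis i)
  have hb : LinearIndependent ℝ b :=
    hA.linearIndependent_eigenvectorBasis.comp _ Subtype.val_injective
  have hiso : ∀ x ∈ Submodule.span ℝ (Set.range b), x ⬝ᵥ diagonal g *ᵥ x = 0 := by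
    refine fun x hx => dotProduct_mulVec_span_eq_zero ?_ hx hx
    rintro _ ⟨i, rfl⟩ _ ⟨j, rfl⟩
    refine dotProduct_mulVec_eq_zero_of_mul_ne_one h (hA.mulVec_eigenvectorBasis i)
      (hA.mulVec_eigenvectorBasis j) ?_
    nlinarith [i.2, j.2]
  calc #{i | 1 < hA.eigenvalues i} = Fintype.card {i // 1 < hA.eigenvalues i} :=
        (Fintype.card_subtype _).symm
    _ = Module.finrank ℝ (Submodule.span ℝ (Set.range b)) := (finrank_span_eq_card hb).symm
    _ ≤ #{k | g k ≤ 0} := finrank_le_card_nonpos_of_isotropic g _ hiso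

lemma PosDef.det_eq_one_of_transpose_mul_mul_eq {L M : Matrix ι ι ℝ} (hL : L.PosDef)
    (hM : M.det ≠ 0) (h : Lᵀ * M * L = M) : L.det = 1 := by
  have hsq : L.det * L.det = 1 := by
    have := congrArg det h
    rw [det_mul, det_mul, det_transpose] at this
    exact mul_right_cancel₀ hM (by linear_combination this)
  nlinarith [hL.det_pos]

lemma PosDef.exists_one_le_eigenvalues_of_det_eq_one [Nonempty ι] {A : Matrix ι ι ℝ}
    (hA : A.PosDef) (hdet : A.det = 1) : ∃ i, 1 ≤ hA.isHermitian.eigenvalues i := by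
  by_contra! hlt
  have hprod : ∏ i, hA.isHermitian.eigenvalues i < ∏ _i : ι, (1 : ℝ) :=
    prod_lt_prod_of_nonempty (fun i _ => hA.eigenvalues_pos i) (fun i _ => hlt i)
      univ_nonempty
  rw [prod_const_one, ← hdet, hA.isHermitian.det_eq_prod_eigenvalues] at hprod
  exact hprod.false

end Matrix

lemma Finset.prod_le_sSup_range_pow {ι : Type*} [Finite ι] {f : ι → ℝ} (hf : ∀ i, 0 ≤ f i)
    (hr : 1 ≤ sSup (Set.range f)) (s : Finset ι) {k : ℕ} (hk : #s ≤ k) :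
    ∏ i ∈ s, f i ≤ sSup (Set.range f) ^ k :=
  calc ∏ i ∈ s, f i ≤ ∏ _i ∈ s, sSup (Set.range f) :=
        prod_le_prod (fun i _ => hf i) fun i _ => le_ciSup (Set.finite_range f).bddAbove i
    _ = sSup (Set.range f) ^ #s := prod_const _
    _ ≤ sSup (Set.range f) ^ k := pow_le_pow_right₀ hr hk

def signatureSigns (p q : ℕ) : Fin (p + q) → ℝ := fun i => if (i : ℕ) < p then 1 else -1

lemma Fin.card_filter_not_val_lt (p q : ℕ) : #{k : Fin (p + q) | ¬ (k : ℕ) < p} = q := by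
  have := card_filter_add_card_filter_not (s := univ) fun k : Fin (p + q) => (k : ℕ) < p
  simp only [Fin.card_filter_val_lt, card_univ, Fintype.card_fin] at this
  omega

lemma card_signatureSigns_nonpos (p q : ℕ) : #{k | signatureSigns p q k ≤ 0} = q := by
  have h (k : Fin (p + q)) : signatureSigns p q k ≤ 0 ↔ ¬ (k : ℕ) < p := by
    unfold signatureSigns; split_ifs <;> norm_num [*]
  simp only [h, Fin.card_filter_not_val_lt]

lemma card_neg_signatureSigns_nonpos (p q : ℕ) : #{k | -signatureSigns p q k ≤ 0} = p := by
  have h (k : Fin (p + q)) : -signatureSigns p q k ≤ 0 ↔ (k : ℕ) < p := by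
    unfold signatureSigns; split_ifs <;> norm_num [*]
  simp only [h, Fin.card_filter_val_lt, min_eq_right (Nat.le_add_right p q)]

lemma det_diagonal_signatureSigns_ne_zero (p q : ℕ) :
    (diagonal (signatureSigns p q)).det ≠ 0 := by
  rw [det_diagonal, prod_ne_zero_iff]
  intro k _
  unfold signatureSigns; split_ifs <;> norm_num

lemma Matrix.IsHermitian.card_one_lt_eigenvalues_le_min {p q : ℕ}
    {L : Matrix (Fin (p + q)) (Fin (p + q)) ℝ} (hL : L.IsHermitian)
    (h : Lᵀ * diagonal (signatureSigns p q) * L = diagonal (signatureSigns p q)) :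
    #{i | 1 < hL.eigenvalues i} ≤ min p q := by
  have hneg : Lᵀ * diagonal (-signatureSigns p q) * L = diagonal (-signatureSigns p q) := by
    rw [show diagonal (-signatureSigns p q) = -diagonal (signatureSigns p q) from
      (diagonal_neg _).symm, Matrix.mul_neg, Matrix.neg_mul, h]
  refine le_min ?_ ?_
  · simpa only [Pi.neg_apply, card_neg_signatureSigns_nonpos] using
      hL.card_one_lt_eigenvalues_le hneg
  · simpa only [card_signatureSigns_nonpos] using hL.card_one_lt_eigenvalues_le h

theorem statement17_general (p q : ℕ) (L : Matrix (Fin (p + q)) (Fin (p + q)) ℝ)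
    (hpos : L.PosDef)
    (hL : Lᵀ * Matrix.diagonal (fun i : Fin (p + q) => if (i : ℕ) < p then (1 : ℝ) else -1) * L
        = Matrix.diagonal (fun i : Fin (p + q) => if (i : ℕ) < p then (1 : ℝ) else -1)) :
    (L.charpoly.roots.filter fun x => 1 < x).card ≤ min p q ∧
      (L.charpoly.roots.filter fun x => 1 < x).prod ≤
        (sSup {x : ℝ | x ∈ L.charpoly.roots}) ^ min p q := by
  change Lᵀ * diagonal (signatureSigns p q) * L = diagonal (signatureSigns p q) at hL
  set μ := hpos.isHermitian.eigenvalues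
  set S : Finset (Fin (p + q)) := {i | 1 < μ i}
  have hroots : L.charpoly.roots = univ.val.map μ := by
    simpa using hpos.isHermitian.roots_charpoly_eq_eigenvalues
  have hfilter : L.charpoly.roots.filter (fun x => 1 < x) = S.val.map μ := by
    rw [hroots, Multiset.filter_map]; rfl
  have hset : {x | x ∈ L.charpoly.roots} = Set.range μ := by ext; simp [hroots]
  have hcard : #S ≤ min p q := hpos.isHermitian.card_one_lt_eigenvalues_le_min hL
  rw [hfilter, Multiset.card_map, ← prod_eq_multiset_prod, hset]
  refine ⟨hcard, ?_⟩
  by_cases hn : p + q = 0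
  · have hS : S = ∅ := card_eq_zero.mp (by omega)
    simp [hS, show min p q = 0 by omega]
  have : Nonempty (Fin (p + q)) := ⟨⟨0, by omega⟩⟩
  obtain ⟨i, hi⟩ := hpos.exists_one_le_eigenvalues_of_det_eq_one
    (hpos.det_eq_one_of_transpose_mul_mul_eq (det_diagonal_signatureSigns_ne_zero p q) hL)
  exact S.prod_le_sSup_range_pow (fun i => (hpos.eigenvalues_pos i).le)
    (hi.trans (le_ciSup (Set.finite_range μ).bddAbove i)) hcard

/-- If `L ∈ M_{p+q}(ℝ)` is symmetric positive definite and pseudo-orthogonal with respect to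
`J = diag(I_p, −I_q)` (`LᵀJL = J`), then (a) the number of eigenvalues of `L` strictly
greater than `1`, counted with multiplicity, is at most `min p q`, and (b) the product of
all eigenvalues of `L` strictly greater than `1`, counted with multiplicity, is at most
`r(L)^{min p q}` where `r(L)` is the largest eigenvalue of `L`. -/
theorem statement17 (p q : ℕ) (L : Matrix (Fin (p + q)) (Fin (p + q)) ℝ)
    (hsymm : L.IsSymm) (hpos : L.PosDef)
    (hL : Lᵀ * Matrix.diagonal (fun i : Fin (p + q) => if (i : ℕ) < p then (1 : ℝ) else -1) * L
        = Matrix.diagonal (fun i : Fin (p + q) => if (i : ℕ) < p then (1 : ℝ) else -1)) :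
    (L.charpoly.roots.filter fun x => 1 < x).card ≤ min p q ∧
      (L.charpoly.roots.filter fun x => 1 < x).prod ≤
        (sSup {x : ℝ | x ∈ L.charpoly.roots}) ^ min p q :=
  statement17_general p q L hpos hL
end
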